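/- arXiv:2404.18661 — 6 statements merged into one kernel-verified Lean document; each statement's English description precedes it below -/
import Mathlib

section
/- Let X be an element of the free ℝ-algebra on generators x_1,…,x_d with word-basis coordinates X^V. Let W be a word of length n over {1,…,d}, let k ≥ n+1, and let ψ be the unique ℝ-algebra homomorphism from the free ℝ-algebra on x_1,…,x_d into k×k matrices with entries in the polynomial ring ℝ[θ_1,…,θ_d] that sends x_j to θ_j · A^W_j (the matrix A^W_j with every entry multiplied by the variable θ_j), for j = 1,…,d. Then the coefficient of the monomial ∏_{i=1}^d θ_i^{r^W(i)} in the (1, n+1)-entry of ψ(X) equals X^W. -/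
/-- `E a b` is the `k × k` real matrix whose `(a,b)`-entry is `1` and all other entries are `0`. -/
def E {k : ℕ} (a b : Fin k) : Matrix (Fin k) (Fin k) ℝ :=
  Matrix.single a b 1

/-- `A^W_i`: for a word `W` (a list over the alphabet `Fin d`) and `k ≥ |W| + 1`, the matrix
`∑_{ℓ : w_ℓ = i} (E^ℓ_{ℓ+1} - E^{ℓ+1}_ℓ)` (zero-based positions). -/
def AW {d k : ℕ} (W : List (Fin d)) (hk : W.length + 1 ≤ k) (i : Fin d) :
    Matrix (Fin k) (Fin k) ℝ :=
  ∑ ℓ : Fin W.length,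
    if W.get ℓ = i then
      E ⟨ℓ.1, by have := ℓ.2; omega⟩ ⟨ℓ.1 + 1, by have := ℓ.2; omega⟩ -
        E ⟨ℓ.1 + 1, by have := ℓ.2; omega⟩ ⟨ℓ.1, by have := ℓ.2; omega⟩
    else 0

/-- The word-basis coordinate `X^V` of an element `X` of the free `ℝ`-algebra on `d`
generators, at the word `V`. -/
noncomputable def coords {d : ℕ} (X : FreeAlgebra ℝ (Fin d)) (V : List (Fin d)) : ℝ :=
  (FreeAlgebra.equivMonoidAlgebraFreeMonoid X : MonoidAlgebra ℝ (FreeMonoid (Fin d))).coeff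
    (FreeMonoid.ofList V)

/-!
Think of `A^W_i` as the signed adjacency matrix of the path `0 — 1 — ⋯ — n`, restricted to the
edges that `W` labels `i`. The `(0, n)`-entry of `A^W_{v_1} ⋯ A^W_{v_m}` is a signed count of walks
from `0` to `n` whose `j`-th step uses an edge labelled `v_j`. Under `ψ` the word `x_V` becomes
`θ^{r^V}` times this product, so the coefficient of `θ^{r^W}` only sees words `V` that are
rearrangements of `W`, hence of length `n`; a walk of length `n` from `0` to `n` must step right
every time, and it exists exactly when `V = W`. Both sides of the theorem are thus linear
functionals of `X` agreeing on the word basis.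
-/

section

open MvPolynomial

theorem list_prod_map_smul {ι M N : Type*} [CommMonoid M] [Monoid N] [MulAction M N]
    [IsScalarTower M N N] [SMulCommClass M N N] (l : List ι) (c : ι → M) (a : ι → N) :
    (l.map fun i => c i • a i).prod = (l.map c).prod • (l.map a).prod := by
  induction l with
  | nil => simp
  | cons i l ih => simp only [List.map_cons, List.prod_cons, ih, smul_mul_smul_comm]

theorem list_prod_map_X {σ R : Type*} [Fintype σ] [DecidableEq σ] [CommSemiring R]
    (V : List σ) :
    (V.map fun v => (X v : MvPolynomial σ R)).prod =
      monomial (Finsupp.equivFunOnFinite.symm fun i => V.count i) 1 := by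
  induction V with
  | nil =>
    rw [List.map_nil, List.prod_nil, ← C_1, ← monomial_zero']
    congr 2
    ext
    simp
  | cons v V ih =>
    rw [List.map_cons, List.prod_cons, ih, X, monomial_mul, one_mul]
    congr 2
    refine Finsupp.ext fun i => ?_
    simp only [Finsupp.add_apply, Finsupp.single_apply, Finsupp.coe_equivFunOnFinite_symm,
      List.count_cons, beq_iff_eq]
    split_ifs <;> omega

theorem equivFunOnFinite_symm_count_eq_iff {σ : Type*} [Fintype σ] [DecidableEq σ]
    {V W : List σ} :
    (Finsupp.equivFunOnFinite.symm fun i => V.count i) =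
        Finsupp.equivFunOnFinite.symm (fun i => W.count i) ↔ V.Perm W := by
  rw [Equiv.apply_eq_iff_eq, List.perm_iff_count, funext_iff]

variable {d k : ℕ} (W : List (Fin d)) (hk : W.length + 1 ≤ k)

theorem AW_apply (i : Fin d) (a b : Fin k) :
    AW W hk i a b = ∑ ℓ : Fin W.length, if W[ℓ] = i then
      ((if ℓ.1 = a.1 ∧ ℓ.1 + 1 = b.1 then 1 else 0) -
        (if ℓ.1 + 1 = a.1 ∧ ℓ.1 = b.1 then 1 else 0)) else 0 := by
  rw [AW, Matrix.sum_apply]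
  refine Finset.sum_congr rfl fun ℓ _ => ?_
  simp only [List.get_eq_getElem, apply_ite (fun M : Matrix (Fin k) (Fin k) ℝ => M a b),
    Matrix.sub_apply, Matrix.zero_apply, E, Matrix.single_apply, Fin.ext_iff, Fin.getElem_fin]

theorem AW_apply_eq_zero (i : Fin d) {a b : Fin k} (hab : a.1 + 1 ≠ b.1) (hba : b.1 + 1 ≠ a.1) :
    AW W hk i a b = 0 := by
  rw [AW_apply]
  refine Finset.sum_eq_zero fun ℓ _ => ?_
  split_ifs <;> first | omega | simp

theorem AW_apply_succ (i : Fin d) {p : ℕ} (hp : p < W.length) {a b : Fin k} (ha : a.1 = p)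
    (hb : b.1 = p + 1) :
    AW W hk i a b = if W[p] = i then 1 else 0 := by
  rw [AW_apply, Finset.sum_eq_single ⟨p, hp⟩]
  · simp [ha, hb]
  · intro ℓ _ hℓ
    have : ℓ.1 ≠ p := fun h => hℓ (Fin.ext h)
    split_ifs <;> first | omega | simp
  · simp

theorem prod_map_AW_apply_eq_zero_of_lt (V : List (Fin d)) {a b : Fin k}
    (hab : a.1 + V.length < b.1) : (V.map (AW W hk)).prod a b = 0 := by
  induction V generalizing a with
  | nil => exact Matrix.one_apply_ne (by rintro rfl; simp at hab)
  | cons i V ih =>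
    rw [List.map_cons, List.prod_cons, Matrix.mul_apply]
    refine Finset.sum_eq_zero fun c _ => ?_
    by_cases hc : c.1 ≤ a.1 + 1
    · rw [ih (by simp at hab; omega), mul_zero]
    · rw [AW_apply_eq_zero W hk i (by omega) (by omega), zero_mul]

theorem prod_map_AW_apply_add_length (V : List (Fin d)) {p : ℕ} (hp : p + V.length ≤ W.length)
    {a b : Fin k} (ha : a.1 = p) (hb : b.1 = p + V.length) :
    (V.map (AW W hk)).prod a b = if V <+: W.drop p then 1 else 0 := by
  induction V generalizing p a with
  | nil =>
    obtain rfl : a = b := Fin.ext (by simp_all)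
    simp
  | cons i V ih =>
    simp only [List.length_cons] at hp hb
    have hpW : p < W.length := by omega
    rw [List.map_cons, List.prod_cons, Matrix.mul_apply, Finset.sum_eq_single ⟨p + 1, by omega⟩,
      AW_apply_succ W hk i hpW ha rfl, ih (p := p + 1) (by omega) rfl (by omega)]
    · simp only [List.drop_eq_getElem_cons hpW, List.cons_prefix_cons, eq_comm (a := i), ite_and,
        ite_mul, one_mul, zero_mul]
    · intro c _ hc
      by_cases hc' : c.1 + 1 = p
      · rw [prod_map_AW_apply_eq_zero_of_lt W hk V (by omega), mul_zero]
      · have hcp : a.1 + 1 ≠ c.1 := fun h => hc (Fin.ext (show c.1 = p + 1 by omega))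
        rw [AW_apply_eq_zero W hk i hcp (by omega), zero_mul]
    · simp

/-- The homomorphism `ψ`. -/
noncomputable def pathRep :
    FreeAlgebra ℝ (Fin d) →ₐ[ℝ] Matrix (Fin k) (Fin k) (MvPolynomial (Fin d) ℝ) :=
  FreeAlgebra.lift ℝ fun j => (X j : MvPolynomial (Fin d) ℝ) • (AW W hk j).map C

theorem pathRep_basisFreeMonoid (m : FreeMonoid (Fin d)) :
    pathRep W hk (FreeAlgebra.basisFreeMonoid ℝ (Fin d) m) =
      monomial (Finsupp.equivFunOnFinite.symm fun i => m.toList.count i) (1 : ℝ) •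
        ((m.toList.map (AW W hk)).prod).map C := by
  have hm : FreeAlgebra.basisFreeMonoid ℝ (Fin d) m = FreeMonoid.lift (FreeAlgebra.ι ℝ) m := by
    simp [FreeAlgebra.basisFreeMonoid, FreeAlgebra.equivMonoidAlgebraFreeMonoid]
  rw [hm, ← AlgHom.coe_toMonoidHom, FreeMonoid.hom_map_lift, FreeMonoid.lift_apply]
  simp only [Function.comp_def, AlgHom.coe_toMonoidHom, pathRep, FreeAlgebra.lift_ι_apply]
  rw [list_prod_map_smul, list_prod_map_X, ← RingHom.mapMatrix_apply, map_list_prod, List.map_map]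
  rfl

theorem coeff_pathRep_basisFreeMonoid_apply (m : FreeMonoid (Fin d)) :
    coeff (Finsupp.equivFunOnFinite.symm fun i => W.count i)
        (pathRep W hk (FreeAlgebra.basisFreeMonoid ℝ (Fin d) m)
          ⟨0, (Nat.succ_pos _).trans_le hk⟩ ⟨W.length, Nat.lt_of_succ_le hk⟩) =
      if m.toList = W then 1 else 0 := by
  rw [pathRep_basisFreeMonoid, Matrix.smul_apply, Matrix.map_apply, smul_eq_mul, mul_comm,
    C_mul_monomial, mul_one, coeff_monomial]
  simp only [equivFunOnFinite_symm_count_eq_iff]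
  by_cases hperm : m.toList.Perm W
  · rw [if_pos hperm, prod_map_AW_apply_add_length W hk _ (p := 0) (by simp [hperm.length_eq]) rfl
      (by simp [hperm.length_eq]), List.drop_zero]
    exact if_congr ⟨fun h => h.eq_of_length hperm.length_eq, fun h => h ▸ List.prefix_refl _⟩
      rfl rfl
  · rw [if_neg hperm, if_neg fun h : m.toList = W => hperm (h ▸ List.Perm.refl _)]

theorem coords_basisFreeMonoid (m : FreeMonoid (Fin d)) :
    coords (FreeAlgebra.basisFreeMonoid ℝ (Fin d) m) W = if m.toList = W then 1 else 0 := by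
  classical
  change (FreeAlgebra.basisFreeMonoid ℝ (Fin d)).repr _ _ = _
  rw [Module.Basis.repr_self, Finsupp.single_apply]
  exact if_congr FreeMonoid.toList.eq_symm_apply rfl rfl

end

/-- let `ψ` be the algebra homomorphism from the free algebra into `k × k` matrices
over `ℝ[θ_1,…,θ_d]` sending `x_j ↦ θ_j • A^W_j`.  Then the coefficient of the monomial
`∏_i θ_i^{r^W(i)}` in the `(1, n+1)`-entry of `ψ(X)` equals `X^W`. -/
theorem stmt1 (d k : ℕ) (W : List (Fin d)) (hk : W.length + 1 ≤ k)
    (X : FreeAlgebra ℝ (Fin d)) :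
    MvPolynomial.coeff (Finsupp.equivFunOnFinite.symm fun i : Fin d => W.count i)
        ((FreeAlgebra.lift ℝ
            (fun j : Fin d =>
              (MvPolynomial.X j : MvPolynomial (Fin d) ℝ) •
                (AW W hk j).map MvPolynomial.C) X)
          ⟨0, by omega⟩ ⟨W.length, by omega⟩) =
      coords X W := by
  let entryCoeff : FreeAlgebra ℝ (Fin d) →ₗ[ℝ] ℝ :=
    MvPolynomial.lcoeff ℝ (Finsupp.equivFunOnFinite.symm fun i => W.count i) ∘ₗ
      Matrix.entryLinearMap ℝ _ ⟨0, by omega⟩ ⟨W.length, by omega⟩ ∘ₗ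
        (pathRep W hk).toLinearMap
  have : entryCoeff = (FreeAlgebra.basisFreeMonoid ℝ (Fin d)).coord (FreeMonoid.ofList W) :=
    (FreeAlgebra.basisFreeMonoid ℝ (Fin d)).ext fun m =>
      (coeff_pathRep_basisFreeMonoid_apply W hk m).trans (coords_basisFreeMonoid W m).symm
  exact LinearMap.congr_fun this X
end

section
/- Let W = (w_1,…,w_n) be a word of length n over {1,…,d} and let k ≥ n+1. Let I = (i_1,…,i_n) and V = (v_1,…,v_n) be words of length n, and assume I is a rearrangement of W. Define the k×k real matrices B_ℓ := A^W_{i_ℓ} if i_ℓ = v_ℓ, and B_ℓ := 0 otherwise, for ℓ = 1,…,n. Then the (1, n+1)-entry of the matrix product B_1 • B_2 • ⋯ • B_n equals 1 if I = W and V = W, and equals 0 otherwise. -/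
/-- `I` is a rearrangement of `J`: same length and same letter multiplicities. -/
def Rearr {d : ℕ} (I J : List (Fin d)) : Prop :=
  I.length = J.length ∧ ∀ i : Fin d, I.count i = J.count i

/-!
Every `B_ℓ` vanishes above the first superdiagonal, and such (lower Hessenberg) matrices have the
property that in the `(0, n)`-entry of a product of `n` of them only the path
`0 → 1 → ⋯ → n` survives: the entry is `∏ ℓ, (B_ℓ)_{ℓ, ℓ+1}`. Since `(A^W_i)_{ℓ, ℓ+1}` is `1` if
`w_ℓ = i` and `0` otherwise, this product is `1` exactly when `i_ℓ = v_ℓ = w_ℓ` for every `ℓ`.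
-/

namespace Matrix

variable {R : Type*} {k : ℕ}

def IsLowerHessenberg [Zero R] (M : Matrix (Fin k) (Fin k) R) : Prop :=
  ∀ a b : Fin k, a.1 + 1 < b.1 → M a b = 0

theorem isLowerHessenberg_zero [Zero R] : (0 : Matrix (Fin k) (Fin k) R).IsLowerHessenberg :=
  fun _ _ _ ↦ rfl

variable [CommSemiring R]

theorem prod_ofFn_apply_eq_zero_of_isLowerHessenberg {n : ℕ}
    (f : Fin n → Matrix (Fin k) (Fin k) R) (hf : ∀ ℓ, (f ℓ).IsLowerHessenberg)
    (i q : Fin k) (hq : i.1 + n < q.1) : (List.ofFn f).prod i q = 0 := by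
  induction n generalizing q with
  | zero => exact one_apply_ne (by rintro rfl; omega)
  | succ n ih =>
    rw [List.ofFn_succ', List.prod_concat, mul_apply]
    refine Finset.sum_eq_zero fun p _ ↦ ?_
    by_cases hp : i.1 + n < p.1
    · rw [ih _ (fun ℓ ↦ hf _) p hp, zero_mul]
    · rw [hf _ p q (by omega), mul_zero]

theorem prod_ofFn_apply_of_isLowerHessenberg {n : ℕ}
    (f : Fin n → Matrix (Fin k) (Fin k) R) (hf : ∀ ℓ, (f ℓ).IsLowerHessenberg)
    (i : Fin k) (hn : i.1 + n < k) :
    (List.ofFn f).prod i ⟨i + n, hn⟩ =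
      ∏ ℓ : Fin n, f ℓ ⟨i + ℓ, by omega⟩ ⟨i + ℓ + 1, by omega⟩ := by
  induction n with
  | zero => simp
  | succ n ih =>
    rw [List.ofFn_succ', List.prod_concat, mul_apply, Fin.prod_univ_castSucc,
      Finset.sum_eq_single ⟨i + n, by omega⟩, ih _ (fun ℓ ↦ hf _) (by omega)]
    · rfl
    · intro p _ hp
      rcases lt_trichotomy p.1 (i + n) with hlt | heq | hgt
      · rw [hf _ p _ (by simp; omega), mul_zero]
      · exact absurd (Fin.ext heq) hp
      · rw [prod_ofFn_apply_eq_zero_of_isLowerHessenberg _ (fun ℓ ↦ hf _) i p hgt, zero_mul]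
    · simp

end Matrix

section AW

variable {d k : ℕ} (W : List (Fin d)) (hk : W.length + 1 ≤ k) (i : Fin d)

theorem AW_isLowerHessenberg : (AW W hk i).IsLowerHessenberg := by
  intro a b hab
  simp only [AW, E, Matrix.sum_apply]
  refine Finset.sum_eq_zero fun ℓ _ ↦ ?_
  split_ifs
  · simp only [Matrix.sub_apply, Matrix.single_apply, Fin.ext_iff]
    split_ifs <;> first | omega | simp
  · rfl

theorem AW_apply_succ_s2 (s : ℕ) (hs : s < W.length) (h1 : s < k) (h2 : s + 1 < k) :
    AW W hk i ⟨s, h1⟩ ⟨s + 1, h2⟩ = if W.get ⟨s, hs⟩ = i then 1 else 0 := by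
  simp only [AW, E, Matrix.sum_apply]
  rw [Finset.sum_eq_single ⟨s, hs⟩]
  · split_ifs <;> simp
  · intro ℓ _ hℓ
    have : ℓ.1 ≠ s := fun h ↦ hℓ (Fin.ext h)
    split_ifs
    · simp only [Matrix.sub_apply, Matrix.single_apply, Fin.ext_iff]
      split_ifs <;> first | omega | simp
    · rfl
  · simp

end AW

/-- with `B_ℓ := A^W_{i_ℓ}` if `i_ℓ = v_ℓ` and `B_ℓ := 0` otherwise, and `I` a
rearrangement of `W`, the `(1, n+1)`-entry of `B_1 ⬝ ⋯ ⬝ B_n` is `1` if `I = W` and `V = W`,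
and `0` otherwise. -/
theorem stmt2 (d k : ℕ) (W I V : List (Fin d)) (hk : W.length + 1 ≤ k)
    (hI : I.length = W.length) (hV : V.length = W.length) :
    (List.ofFn fun ℓ : Fin W.length =>
        if I.get (Fin.cast hI.symm ℓ) = V.get (Fin.cast hV.symm ℓ) then
          AW W hk (I.get (Fin.cast hI.symm ℓ))
        else 0).prod ⟨0, by omega⟩ ⟨W.length, by omega⟩ =
      if I = W ∧ V = W then 1 else 0 := by
  set f : Fin W.length → Matrix (Fin k) (Fin k) ℝ := fun ℓ ↦
    if I.get (Fin.cast hI.symm ℓ) = V.get (Fin.cast hV.symm ℓ) then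
      AW W hk (I.get (Fin.cast hI.symm ℓ))
    else 0
  have hf (ℓ) : (f ℓ).IsLowerHessenberg := by
    simp only [f]
    split_ifs
    exacts [AW_isLowerHessenberg W hk _, Matrix.isLowerHessenberg_zero]
  have hfactor (ℓ : Fin W.length) : f ℓ ⟨0 + ℓ, by omega⟩ ⟨0 + ℓ + 1, by omega⟩ =
      if I.get (Fin.cast hI.symm ℓ) = V.get (Fin.cast hV.symm ℓ) ∧
        W.get ℓ = I.get (Fin.cast hI.symm ℓ) then 1 else 0 := by
    simp only [f]
    by_cases hIV : I.get (Fin.cast hI.symm ℓ) = V.get (Fin.cast hV.symm ℓ)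
    · rw [if_pos hIV, AW_apply_succ_s2 W hk _ (0 + ℓ) (by omega)]
      simp only [hIV, true_and]
      simp
    · rw [if_neg hIV, if_neg (hIV ·.1)]
      rfl
  have hwords : (∀ ℓ : Fin W.length, I.get (Fin.cast hI.symm ℓ) = V.get (Fin.cast hV.symm ℓ) ∧
      W.get ℓ = I.get (Fin.cast hI.symm ℓ)) ↔ I = W ∧ V = W := by
    simp only [List.get_eq_getElem, Fin.val_cast, Fin.forall_iff, List.ext_get_iff, hI, hV,
      true_and]
    grind
  have hcol : (⟨W.length, by omega⟩ : Fin k) = ⟨0 + W.length, by omega⟩ := by simp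
  rw [hcol, Matrix.prod_ofFn_apply_of_isLowerHessenberg f hf ⟨0, by omega⟩ (by simp; omega),
    Finset.prod_congr rfl fun ℓ _ ↦ hfactor ℓ, Finset.prod_boole]
  simp only [Finset.mem_univ, forall_const, hwords]
end

section
/- Let d, k ≥ 1 and let N_{i,j} be arbitrary k×k real matrices for i, j ∈ {1,…,d}. Let X be an element of the free ℝ-algebra on x_1,…,x_d with word-basis coordinates X^V, and let ψ be the unique ℝ-algebra homomorphism into k×k matrices with entries in ℝ[θ_1,…,θ_d] sending x_j to ∑_{i=1}^d θ_i · N_{i,j}. Let J = (j_1,…,j_L) be a word of length L. Then applying the iterated partial derivative ∂_{θ_{j_1}}⋯∂_{θ_{j_L}} entrywise to ψ(X) and evaluating all entries at θ = 0 yields C_J · ∑_{V = (v_1,…,v_L) a word of length L} X^V · ( ∑_{I = (i_1,…,i_L) a word that is a rearrangement of J} N_{i_1,v_1} • N_{i_2,v_2} • ⋯ • N_{i_L,v_L} ). -/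
instance {d : ℕ} (I J : List (Fin d)) : Decidable (Rearr I J) := by
  unfold Rearr; infer_instance

/-- `C_J := ∏_{i=1}^d (r^J(i))!`. -/
def CW {d : ℕ} (J : List (Fin d)) : ℕ :=
  ∏ i : Fin d, Nat.factorial (J.count i)

/-!
Evaluating `∂_{θ_{j_1}} ⋯ ∂_{θ_{j_L}} p` at `θ = 0` gives `C_J` times the coefficient of `p` at the
monomial `θ^{r^J}`. Since `ψ` is linear in the `θ_i`, expanding the product
`ψ(x_V) = ∏_ℓ ∑_i θ_i N_{i,v_ℓ}` gives `∑_I θ_{i_1} ⋯ θ_{i_L} • N_{i_1,v_1} ⋯ N_{i_L,v_L}`, and the words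
`I` contributing to the coefficient of `θ^{r^J}` are exactly the rearrangements of `J`. Both sides
are linear in `X`, so it suffices to compare them on the word basis.
-/

open MvPolynomial

theorem List.prod_ofFn_sum {A κ : Type*} [Semiring A] [Fintype κ] {m : ℕ} (f : Fin m → κ → A) :
    (List.ofFn fun ℓ => ∑ i, f ℓ i).prod =
      ∑ I : Fin m → κ, (List.ofFn fun ℓ => f ℓ (I ℓ)).prod := by
  induction m with
  | zero => simp
  | succ m ih =>
    rw [List.ofFn_succ, List.prod_cons, ih, Finset.sum_mul_sum,
      ← (Fin.consEquiv fun _ => κ).sum_comp, Fintype.sum_prod_type]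
    simp [Fin.consEquiv, List.ofFn_succ]

theorem FreeAlgebra.basisFreeMonoid_ofList {R ι : Type*} [CommSemiring R] (l : List ι) :
    FreeAlgebra.basisFreeMonoid R ι (FreeMonoid.ofList l) = (l.map (FreeAlgebra.ι R)).prod := by
  simp [FreeAlgebra.basisFreeMonoid, FreeAlgebra.equivMonoidAlgebraFreeMonoid]

section LetterCount

variable {σ : Type*} [DecidableEq σ]

theorem Multiset.toFinsupp_cons_coe (j : σ) (J : List σ) :
    Multiset.toFinsupp (↑(j :: J) : Multiset σ) = Finsupp.single j 1 + Multiset.toFinsupp ↑J := by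
  rw [← Multiset.cons_coe, ← Multiset.singleton_add, Multiset.toFinsupp_add,
    Multiset.toFinsupp_singleton]

theorem Multiset.toFinsupp_coe_eq_iff_perm {I J : List σ} :
    Multiset.toFinsupp (I : Multiset σ) = Multiset.toFinsupp ↑J ↔ I.Perm J :=
  Multiset.toFinsupp.injective.eq_iff.trans Multiset.coe_eq_coe

theorem Finsupp.prod_factorial_add_single [Fintype σ] (m : σ →₀ ℕ) (j : σ) :
    ∏ i, ((m + Finsupp.single j 1 : σ →₀ ℕ) i).factorial = (m j + 1) * ∏ i, (m i).factorial := by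
  rw [← Finset.mul_prod_erase _ _ (Finset.mem_univ j),
    ← Finset.mul_prod_erase _ (fun i => (m i).factorial) (Finset.mem_univ j),
    Finset.prod_congr rfl fun i hi => by rw [Finsupp.add_apply,
      Finsupp.single_eq_of_ne (Finset.ne_of_mem_erase hi), add_zero]]
  simp [Nat.factorial_succ, mul_assoc]

end LetterCount

section IteratedPDeriv

variable {R σ : Type*} [CommSemiring R] [DecidableEq σ] [Fintype σ]

/-- Cleared of the denominators `∏ i, (m i)!`, so that no division in `R` is needed. -/
theorem coeff_foldr_pderiv_mul_prod_factorial (J : List σ) (p : MvPolynomial σ R)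
    (m : σ →₀ ℕ) :
    coeff m (J.foldr (fun j q => pderiv j q) p) * ∏ i, ((m i).factorial : R) =
      coeff (m + Multiset.toFinsupp ↑J) p *
        ∏ i, (((m + Multiset.toFinsupp ↑J : σ →₀ ℕ) i).factorial : R) := by
  induction J generalizing m with
  | nil => simp
  | cons j J ih =>
    rw [List.foldr_cons, coeff_pderiv, mul_assoc, Multiset.toFinsupp_cons_coe, ← add_assoc, ← ih]
    congr 1
    rw [← Nat.cast_prod, ← Nat.cast_prod, Finsupp.prod_factorial_add_single]
    push_cast
    rfl

theorem constantCoeff_foldr_pderiv (J : List σ) (p : MvPolynomial σ R) :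
    constantCoeff (J.foldr (fun j q => pderiv j q) p) =
      (∏ i, ((J.count i).factorial : R)) * coeff (Multiset.toFinsupp ↑J) p := by
  simpa [mul_comm, constantCoeff_eq] using coeff_foldr_pderiv_mul_prod_factorial J p 0

end IteratedPDeriv

theorem mapMatrix_lcoeff_monomial_smul_map_C {R σ n : Type*} [CommSemiring R] [DecidableEq σ]
    (α β : σ →₀ ℕ) (B : Matrix n n R) :
    (lcoeff R α).mapMatrix (monomial β (1 : R) • B.map C) = if β = α then B else 0 := by
  ext a b
  split_ifs with h <;> simp [mul_comm, coeff_C_mul, coeff_monomial, h]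

section Pencil

variable {R σ ι n : Type*} [CommSemiring R] [Fintype n] [DecidableEq n]

theorem prod_ofFn_X_smul_map_C [DecidableEq σ] {m : ℕ} (I : Fin m → σ)
    (B : Fin m → Matrix n n R) :
    (List.ofFn fun ℓ => (X (I ℓ) : MvPolynomial σ R) • (B ℓ).map (C : R → MvPolynomial σ R)).prod =
      monomial (Multiset.toFinsupp (List.ofFn I : Multiset σ)) (1 : R) •
        (List.ofFn B).prod.map C := by
  induction m with
  | zero => simpa using (Matrix.map_one _ (map_zero C) (map_one C)).symm
  | succ m ih =>
    rw [List.ofFn_succ, List.prod_cons, ih, smul_mul_smul_comm, ← Matrix.map_mul, List.ofFn_succ,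
      List.ofFn_succ, List.prod_cons, Multiset.toFinsupp_cons_coe, X, monomial_mul, one_mul]

variable [Fintype σ]

/-- The homomorphism `ψ : x_j ↦ ∑_i θ_i • N_{i,j}`, the variable `θ_i` being `X i`. -/
noncomputable def pencilHom (N : σ → ι → Matrix n n R) :
    FreeAlgebra R ι →ₐ[R] Matrix n n (MvPolynomial σ R) :=
  FreeAlgebra.lift R fun j => ∑ i, (X i : MvPolynomial σ R) • (N i j).map C

variable [DecidableEq σ]

theorem pencilHom_basisFreeMonoid_ofFn (N : σ → ι → Matrix n n R) {m : ℕ} (V : Fin m → ι) :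
    pencilHom N (FreeAlgebra.basisFreeMonoid R ι (FreeMonoid.ofList (List.ofFn V))) =
      ∑ I : Fin m → σ, monomial (Multiset.toFinsupp (List.ofFn I : Multiset σ)) (1 : R) •
        (List.ofFn fun ℓ => N (I ℓ) (V ℓ)).prod.map C := by
  rw [FreeAlgebra.basisFreeMonoid_ofList, map_list_prod, List.map_map, List.map_ofFn]
  simp only [Function.comp_def, pencilHom, FreeAlgebra.lift_ι_apply]
  rw [List.prod_ofFn_sum]
  simp only [prod_ofFn_X_smul_map_C]

variable [Fintype ι]

theorem mapMatrix_lcoeff_pencilHom_basisFreeMonoid_ofFn (N : σ → ι → Matrix n n R) {m : ℕ}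
    (W : Fin m → ι) (J : List σ) :
    (lcoeff R (Multiset.toFinsupp ↑J)).mapMatrix
        (pencilHom N (FreeAlgebra.basisFreeMonoid R ι (FreeMonoid.ofList (List.ofFn W)))) =
      ∑ V : Fin J.length → ι,
        (FreeAlgebra.basisFreeMonoid R ι).repr
            (FreeAlgebra.basisFreeMonoid R ι (FreeMonoid.ofList (List.ofFn W)))
            (FreeMonoid.ofList (List.ofFn V)) •
          ∑ I : Fin J.length → σ,
            if (List.ofFn I).Perm J then (List.ofFn fun ℓ => N (I ℓ) (V ℓ)).prod else 0 := by
  simp only [pencilHom_basisFreeMonoid_ofFn, map_sum, mapMatrix_lcoeff_monomial_smul_map_C,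
    Multiset.toFinsupp_coe_eq_iff_perm, Module.Basis.repr_self]
  by_cases hm : m = J.length
  · subst hm
    rw [Finset.sum_eq_single W, Finsupp.single_eq_same, one_smul]
    · intro V _ hV
      rw [Finsupp.single_eq_of_ne fun h => hV (List.ofFn_injective (FreeMonoid.ofList.injective h)),
        zero_smul]
    · simp
  · trans 0
    · refine Finset.sum_eq_zero fun I _ => if_neg fun h => hm ?_
      simpa using h.length_eq
    · refine (Finset.sum_eq_zero fun V _ => ?_).symm
      rw [Finsupp.single_eq_of_ne, zero_smul]
      intro h
      exact hm (by simpa using congrArg List.length (FreeMonoid.ofList.injective h).symm)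

theorem mapMatrix_lcoeff_pencilHom (N : σ → ι → Matrix n n R) (x : FreeAlgebra R ι)
    (J : List σ) :
    (lcoeff R (Multiset.toFinsupp ↑J)).mapMatrix (pencilHom N x) =
      ∑ V : Fin J.length → ι,
        (FreeAlgebra.basisFreeMonoid R ι).repr x (FreeMonoid.ofList (List.ofFn V)) •
          ∑ I : Fin J.length → σ,
            if (List.ofFn I).Perm J then (List.ofFn fun ℓ => N (I ℓ) (V ℓ)).prod else 0 := by
  set b := FreeAlgebra.basisFreeMonoid R ι
  suffices h : (lcoeff R (Multiset.toFinsupp ↑J)).mapMatrix ∘ₗ (pencilHom N).toLinearMap =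
      ∑ V : Fin J.length → ι, (b.coord (FreeMonoid.ofList (List.ofFn V))).smulRight
        (∑ I : Fin J.length → σ,
          if (List.ofFn I).Perm J then (List.ofFn fun ℓ => N (I ℓ) (V ℓ)).prod else 0) by
    simpa using LinearMap.congr_fun h x
  refine b.ext fun w => ?_
  obtain ⟨m, W, rfl⟩ : ∃ m, ∃ W : Fin m → ι, w = FreeMonoid.ofList (List.ofFn W) :=
    ⟨_, w.toList.get, by simp⟩
  simpa using mapMatrix_lcoeff_pencilHom_basisFreeMonoid_ofFn N W J

end Pencil

theorem rearr_iff_perm {d : ℕ} (I J : List (Fin d)) : Rearr I J ↔ I.Perm J :=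
  ⟨fun h => List.perm_iff_count.2 h.2, fun h => ⟨h.length_eq, List.perm_iff_count.1 h⟩⟩

theorem coords_eq_repr {d : ℕ} (X : FreeAlgebra ℝ (Fin d)) (V : List (Fin d)) :
    coords X V = (FreeAlgebra.basisFreeMonoid ℝ (Fin d)).repr X (FreeMonoid.ofList V) :=
  rfl

theorem stmt6_general (d k : ℕ)
    (N : Fin d → Fin d → Matrix (Fin k) (Fin k) ℝ)
    (X : FreeAlgebra ℝ (Fin d)) (J : List (Fin d)) :
    (FreeAlgebra.lift ℝ
          (fun j : Fin d =>
            ∑ i : Fin d,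
              (MvPolynomial.X i : MvPolynomial (Fin d) ℝ) • (N i j).map MvPolynomial.C) X).map
        (fun p => MvPolynomial.eval (0 : Fin d → ℝ)
          (J.foldr (fun j q => MvPolynomial.pderiv j q) p)) =
      (CW J : ℝ) •
        ∑ V : Fin J.length → Fin d,
          coords X (List.ofFn V) •
            ∑ I : Fin J.length → Fin d,
              if Rearr (List.ofFn I) J then
                (List.ofFn fun ℓ : Fin J.length => N (I ℓ) (V ℓ)).prod
              else 0 := by
  have hderiv : (pencilHom N X).map (fun p => eval 0 (J.foldr (fun j q => pderiv j q) p)) =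
      (CW J : ℝ) • (lcoeff ℝ (Multiset.toFinsupp ↑J)).mapMatrix (pencilHom N X) := by
    ext a b
    simp [eval_zero, constantCoeff_foldr_pderiv, CW]
  rw [← pencilHom, hderiv, mapMatrix_lcoeff_pencilHom]
  simp only [rearr_iff_perm, coords_eq_repr]

/-- for arbitrary `k × k` real matrices `N i j`, letting `ψ` send `x_j` to
`∑_i θ_i • N i j`, applying `∂_{θ_{j_1}} ⋯ ∂_{θ_{j_L}}` entrywise to `ψ(X)` and evaluating at
`θ = 0` yields `C_J • ∑_{V of length L} X^V • ∑_{I rearrangement of J} N_{i_1,v_1} ⬝ ⋯ ⬝ N_{i_L,v_L}`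
(length-`L` words are encoded as functions `Fin L → Fin d`). -/
theorem stmt6 (d k : ℕ) (hd : 0 < d) (hk : 0 < k)
    (N : Fin d → Fin d → Matrix (Fin k) (Fin k) ℝ)
    (X : FreeAlgebra ℝ (Fin d)) (J : List (Fin d)) :
    (FreeAlgebra.lift ℝ
          (fun j : Fin d =>
            ∑ i : Fin d,
              (MvPolynomial.X i : MvPolynomial (Fin d) ℝ) • (N i j).map MvPolynomial.C) X).map
        (fun p => MvPolynomial.eval (0 : Fin d → ℝ)
          (J.foldr (fun j q => MvPolynomial.pderiv j q) p)) =
      (CW J : ℝ) •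
        ∑ V : Fin J.length → Fin d,
          coords X (List.ofFn V) •
            ∑ I : Fin J.length → Fin d,
              if Rearr (List.ofFn I) J then
                (List.ofFn fun ℓ : Fin J.length => N (I ℓ) (V ℓ)).prod
              else 0 :=
  stmt6_general d k N X J
end

section
/- Let X be an element of the free ℝ-algebra on generators x_1,…,x_d, and suppose X^W ≠ 0 for some word W of length n. Then for every k ≥ n+1 there exist k×k real matrices N_1,…,N_d, each tridiagonal antisymmetric, such that Ñ(X) ≠ 0, where Ñ is the unique ℝ-algebra homomorphism from the free ℝ-algebra on x_1,…,x_d into k×k real matrices sending x_j to N_j for j = 1,…,d. -/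
open Matrix

/-- A `k × k` real matrix is tridiagonal antisymmetric if `N + Nᵀ = 0` and its `(a,b)`-entry
vanishes whenever `|a - b| ≠ 1`. -/
def TriAnti {k : ℕ} (N : Matrix (Fin k) (Fin k) ℝ) : Prop :=
  N + Nᵀ = 0 ∧ ∀ a b : Fin k, ((a : ℤ) - (b : ℤ)).natAbs ≠ 1 → N a b = 0

/-!
Substitute for `x_j` the generic tridiagonal antisymmetric matrix whose superdiagonal entries are
independent variables `X (j, i)`. The `(a, b)`-entry of `N_{v_1} ⋯ N_{v_m}` is a signed sum over
lattice paths `a → b` with steps `±1` labelled by `v_1, …, v_m`, each contributing the product of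
the variables on its edges. The multilinear monomial `∏ᵢ X (w_i, i)` comes only from the path that
climbs straight from `0` to `n` labelled by `W`, so its coefficient in the `(0, n)`-entry of `Ñ(X)`
is `X^W ≠ 0`. That entry is thus a nonzero real polynomial, and any point where it does not vanish
gives the matrices `N_j`.
-/

theorem FreeAlgebra.lift_equivMonoidAlgebraFreeMonoid_symm_single {R σ A : Type*}
    [CommSemiring R] [Semiring A] [Algebra R A] (f : σ → A) (a : FreeMonoid σ) (r : R) :
    lift R f (equivMonoidAlgebraFreeMonoid.symm (MonoidAlgebra.single a r)) =
      r • (a.toList.map f).prod := by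
  have : equivMonoidAlgebraFreeMonoid.symm (MonoidAlgebra.single a r) =
      r • (a.toList.map (ι R)).prod :=
    (MonoidAlgebra.lift_single _ _ _).trans (by rw [FreeMonoid.lift_apply])
  rw [this, map_smul, map_list_prod, List.map_map, ι_comp_lift]

theorem FreeAlgebra.lift_map_matrix {R σ n A B : Type*} [CommSemiring R] [Fintype n]
    [DecidableEq n] [Semiring A] [Algebra R A] [Semiring B] [Algebra R B] (φ : A →ₐ[R] B)
    (f : σ → Matrix n n A) (x : FreeAlgebra R σ) :
    lift R (fun j => (f j).map φ) x = (lift R f x).map φ := by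
  have : lift R (fun j => (f j).map φ) = φ.mapMatrix.comp (lift R f) := by
    ext j
    simp
  rw [this, AlgHom.comp_apply, AlgHom.mapMatrix_apply]

theorem MvPolynomial.coeff_X_mul_of_apply_eq_zero {R σ : Type*} [CommSemiring R] {m : σ →₀ ℕ}
    {s : σ} (hs : m s = 0) (p : MvPolynomial σ R) : coeff m (X s * p) = 0 := by
  classical
  rw [coeff_X_mul', if_neg (Finsupp.notMem_support_iff.2 hs)]

def tridiagAntisymm {R : Type*} [AddGroup R] (k : ℕ) (x : ℕ → R) : Matrix (Fin k) (Fin k) R :=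
  of fun a b => if (b : ℕ) = a + 1 then x a else if (a : ℕ) = b + 1 then -x b else 0

theorem triAnti_tridiagAntisymm (k : ℕ) (x : ℕ → ℝ) : TriAnti (tridiagAntisymm k x) := by
  refine ⟨?_, fun a b hab => ?_⟩
  · ext a b
    simp only [tridiagAntisymm, Matrix.add_apply, transpose_apply, of_apply, Matrix.zero_apply]
    split_ifs <;> first | omega | simp
  · simp only [tridiagAntisymm, of_apply]
    split_ifs <;> first | rfl | omega

theorem map_tridiagAntisymm {R S F : Type*} [AddGroup R] [AddGroup S] [FunLike F R S]
    [AddMonoidHomClass F R S] (f : F) (k : ℕ) (x : ℕ → R) :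
    (tridiagAntisymm k x).map f = tridiagAntisymm k (f ∘ x) := by
  ext a b
  simp only [tridiagAntisymm, map_apply, of_apply, Function.comp_apply]
  split_ifs <;> simp

namespace GenericTridiag

open MvPolynomial

variable {R ι : Type*} [CommRing R]

/-- The exponent of `∏ᵢ X (W[i], a + i)`, the weight of the path `a → a + 1 → ⋯ → a + |W|`
labelled by `W`. -/
noncomputable def staircase : List ι → ℕ → (ι × ℕ) →₀ ℕ
  | [], _ => 0
  | w :: W, a => Finsupp.single (w, a) 1 + staircase W (a + 1)

theorem staircase_apply_of_lt (W : List ι) {a i : ℕ} (hi : i < a) (j : ι) :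
    staircase W a (j, i) = 0 := by
  induction W generalizing a with
  | nil => rfl
  | cons w W ih =>
    simp [staircase, ih (Nat.lt_succ_of_lt hi), hi.ne']

noncomputable def genericMatrix (k : ℕ) (j : ι) :
    Matrix (Fin k) (Fin k) (MvPolynomial (ι × ℕ) R) :=
  tridiagAntisymm k fun i => X (j, i)

theorem map_aeval_genericMatrix (k : ℕ) (j : ι) (t : ι × ℕ → R) :
    (genericMatrix (R := R) k j).map (aeval t) = tridiagAntisymm k fun i => t (j, i) := by
  rw [genericMatrix, map_tridiagAntisymm]
  simp [Function.comp_def]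

theorem coeff_staircase_genericMatrix_mul [DecidableEq ι] (k : ℕ) (j : ι) (W : List ι)
    (a c : Fin k) (p : MvPolynomial (ι × ℕ) R) :
    coeff (staircase W a) (genericMatrix k j a c * p) =
      if (c : ℕ) = a + 1 ∧ W.head? = some j then coeff (staircase W.tail (a + 1)) p else 0 := by
  simp only [genericMatrix, tridiagAntisymm, of_apply]
  by_cases hup : (c : ℕ) = a + 1
  · simp only [hup, if_true, true_and]
    rcases W with - | ⟨w, W⟩
    · simpa using coeff_X_mul_of_apply_eq_zero (R := R) (m := staircase [] a) rfl p
    · by_cases hwj : w = j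
      · subst hwj
        simp [staircase]
      · rw [if_neg (by simpa using hwj)]
        refine coeff_X_mul_of_apply_eq_zero ?_ p
        simp [staircase, staircase_apply_of_lt W (Nat.lt_succ_self _), hwj]
  · rw [if_neg (show ¬((c : ℕ) = a + 1 ∧ _) from fun h => hup h.1), if_neg hup]
    split_ifs
    · rw [neg_mul, coeff_neg, coeff_X_mul_of_apply_eq_zero (staircase_apply_of_lt W (by omega) j),
        neg_zero]
    · rw [zero_mul, coeff_zero]

theorem coeff_staircase_prod_genericMatrix [DecidableEq ι] (k : ℕ) (V W : List ι) (a b : Fin k)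
    (hab : (b : ℕ) = a + W.length) :
    coeff (staircase W a) ((V.map (genericMatrix (R := R) k)).prod a b) =
      if V = W then 1 else 0 := by
  induction V generalizing W a with
  | nil =>
    rcases W with - | ⟨w, W⟩
    · obtain rfl : a = b := Fin.ext hab.symm
      simp [staircase]
    · have hne : a ≠ b := fun h => by simp [h] at hab
      simp [one_apply_ne hne]
  | cons j V ih =>
    rw [List.map_cons, List.prod_cons, mul_apply, coeff_sum]
    simp_rw [coeff_staircase_genericMatrix_mul]
    rcases W with - | ⟨w, W⟩
    · simp
    · let a' : Fin k := ⟨a + 1, by simp at hab; omega⟩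
      have ih' := ih W a' (by simp [a', hab]; omega)
      rw [Finset.sum_eq_single a' (fun c _ hc => if_neg fun h => hc (Fin.ext h.1)) (by simp)]
      by_cases hwj : w = j
      · subst hwj
        simpa [a'] using ih'
      · simp [hwj, Ne.symm hwj]

theorem coeff_staircase_lift_genericMatrix [DecidableEq ι] (k : ℕ) (x : FreeAlgebra R ι)
    (W : List ι) (a b : Fin k) (hab : (b : ℕ) = a + W.length) :
    coeff (staircase W a) (FreeAlgebra.lift R (genericMatrix k) x a b) =
      (FreeAlgebra.equivMonoidAlgebraFreeMonoid x).coeff (FreeMonoid.ofList W) := by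
  obtain ⟨F, rfl⟩ := FreeAlgebra.equivMonoidAlgebraFreeMonoid.symm.surjective x
  rw [AlgEquiv.apply_symm_apply]
  induction F using MonoidAlgebra.induction_linear with
  | zero => simp
  | add F G hF hG => simp [hF, hG]
  | single m r =>
    classical
    rw [FreeAlgebra.lift_equivMonoidAlgebraFreeMonoid_symm_single, Matrix.smul_apply, coeff_smul,
      coeff_staircase_prod_genericMatrix k _ W a b hab, MonoidAlgebra.coeff_single,
      Finsupp.single_apply, smul_ite, smul_eq_mul, mul_one, smul_zero]
    exact if_congr FreeMonoid.toList.eq_symm_apply.symm rfl rfl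

end GenericTridiag

open GenericTridiag MvPolynomial in
theorem stmt7_general (d : ℕ) (X : FreeAlgebra ℝ (Fin d)) (W : List (Fin d))
    (hW : coords X W ≠ 0) (k : ℕ) (hk : W.length + 1 ≤ k) :
    ∃ N : Fin d → Matrix (Fin k) (Fin k) ℝ,
      (∀ j, TriAnti (N j)) ∧ FreeAlgebra.lift ℝ N X ≠ 0 := by
  let a : Fin k := ⟨0, by omega⟩
  let b : Fin k := ⟨W.length, hk⟩
  set P : MvPolynomial (Fin d × ℕ) ℝ := FreeAlgebra.lift ℝ (genericMatrix k) X a b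
  have hcoeff : coeff (staircase W 0) P = coords X W :=
    coeff_staircase_lift_genericMatrix k X W a b (zero_add _).symm
  have hP : P ≠ 0 := fun h => hW (by rw [← hcoeff, h, coeff_zero])
  obtain ⟨t, ht⟩ : ∃ t, eval t P ≠ 0 := by
    by_contra! h
    exact hP (MvPolynomial.funext fun t => by simp [h t])
  refine ⟨fun j => tridiagAntisymm k fun i => t (j, i), fun j => triAnti_tridiagAntisymm k _,
    fun h => ht ?_⟩
  simp_rw [← map_aeval_genericMatrix, FreeAlgebra.lift_map_matrix] at h
  simpa [P] using congr_fun₂ h a b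

/-- if `X^W ≠ 0` for some word `W` of length `n`, then for every `k ≥ n + 1` there
are tridiagonal antisymmetric `k × k` real matrices `N_1, …, N_d` such that the algebra
homomorphism `Ñ` sending `x_j ↦ N_j` satisfies `Ñ(X) ≠ 0`. -/
theorem stmt7 (d : ℕ) (hd : 0 < d) (X : FreeAlgebra ℝ (Fin d)) (W : List (Fin d))
    (hW : coords X W ≠ 0) (k : ℕ) (hk : W.length + 1 ≤ k) :
    ∃ N : Fin d → Matrix (Fin k) (Fin k) ℝ,
      (∀ j, TriAnti (N j)) ∧ FreeAlgebra.lift ℝ N X ≠ 0 :=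
  stmt7_general d X W hW k hk
end

section
/- Let c be a coefficient family with radius of convergence at least R for some R > 0, and suppose c(W) ≠ 0 for some word W of length n. Then for every k ≥ n+1 there exist k×k real matrices N_1,…,N_d, each tridiagonal antisymmetric, such that the family (c(V) · N_V)_{V a word} is summable in the space of k×k real matrices and its sum ∑'_V c(V) · N_V is a nonzero matrix. -/
/-!
Let `A_j = S_j - S_jᵀ`, where `S_j` has a `1` at `(a, a + 1)` exactly when the `a`-th letter of
`W` is `j`. A walk from `0` to `n = |W|` along the band `|a - b| = 1` needs at least `n` steps and
the only one of length `n` climbs straight up, so the `(0, n)` entry of `A_V` vanishes for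
`|V| ≤ n` except for `V = W`, where it is `1`. Hence, with `N_j = t A_j`, the `(0, n)` entry of
`∑' V, c V • N_V` is a power series in `t` whose lowest-order term is `c(W) tⁿ`; dividing by `tⁿ`
and letting `t → 0⁺` (dominated convergence) shows that it is nonzero for small `t > 0`.
-/

open Matrix

open Filter Topology

section LowestOrderTerm

variable {ι : Type*} {a : ι → ℝ} {ℓ : ι → ℕ} {i₀ : ι}

lemma mul_pow_eq_pow_mul_mul_pow_sub (hlow : ∀ i, i ≠ i₀ → ℓ i ≤ ℓ i₀ → a i = 0)
    (t : ℝ) (i : ι) : a i * t ^ ℓ i = t ^ ℓ i₀ * (a i * t ^ (ℓ i - ℓ i₀)) := by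
  by_cases h : ℓ i₀ ≤ ℓ i
  · rw [mul_left_comm, ← pow_add, Nat.add_sub_cancel' h]
  · rw [hlow i (by rintro rfl; exact h le_rfl) (by omega)]
    simp

lemma eventually_tsum_mul_pow_ne_zero {R : ℝ} (hR : 0 < R)
    (ha : Summable fun i => |a i| * R ^ ℓ i) (ha₀ : a i₀ ≠ 0)
    (hlow : ∀ i, i ≠ i₀ → ℓ i ≤ ℓ i₀ → a i = 0) :
    ∀ᶠ t in 𝓝[>] 0, ∑' i, a i * t ^ ℓ i ≠ 0 := by
  set n := ℓ i₀
  have hfactor := mul_pow_eq_pow_mul_mul_pow_sub hlow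
  have hbound : ∀ i, |a i * R ^ (ℓ i - n)| = |a i| * R ^ ℓ i / R ^ n := by
    intro i
    have h := congrArg (|·|) (hfactor R i)
    simp only [abs_mul, abs_pow, abs_of_pos hR] at h
    rw [eq_div_iff (by positivity), h, abs_mul, abs_pow, abs_of_pos hR]
    ring
  have hlim : Tendsto (fun t => ∑' i, a i * t ^ (ℓ i - n)) (𝓝[>] 0)
      (𝓝 (∑' i, a i * 0 ^ (ℓ i - n))) := by
    refine tendsto_tsum_of_dominated_convergence (ha.div_const (R ^ n))
      (fun i => ((continuous_const.mul (continuous_pow _)).tendsto 0).mono_left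
        nhdsWithin_le_nhds) ?_
    filter_upwards [Ioo_mem_nhdsGT hR] with t ht i
    rw [← hbound, Real.norm_eq_abs, abs_mul, abs_mul, abs_pow, abs_pow, abs_of_pos ht.1,
      abs_of_pos hR]
    gcongr
    exacts [ht.1.le, ht.2.le]
  have hlim₀ : ∑' i, a i * 0 ^ (ℓ i - n) = a i₀ := by
    rw [tsum_eq_single i₀ fun i hi => ?_, Nat.sub_self, pow_zero, mul_one]
    by_cases h : ℓ i ≤ n
    · rw [hlow i hi h, zero_mul]
    · rw [zero_pow (by omega), mul_zero]
  rw [hlim₀] at hlim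
  filter_upwards [hlim.eventually_ne ha₀, self_mem_nhdsWithin] with t ht ht₀
  simp_rw [hfactor t, tsum_mul_left]
  exact mul_ne_zero (pow_ne_zero _ (ne_of_gt ht₀)) ht

end LowestOrderTerm

section ListProd

variable {ι n : Type*} [Fintype n] [DecidableEq n]

lemma abs_list_prod_apply_le (M : ι → Matrix n n ℝ) (hM : ∀ j a b, |M j a b| ≤ 1)
    (V : List ι) (a b : n) : |(V.map M).prod a b| ≤ (Fintype.card n : ℝ) ^ V.length := by
  induction V generalizing a with
  | nil =>
    rw [List.map_nil, List.prod_nil, one_apply]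
    split_ifs <;> simp
  | cons j V ih =>
    rw [List.map_cons, List.prod_cons, mul_apply, List.length_cons, pow_succ]
    calc |∑ x, M j a x * (V.map M).prod x b|
        ≤ ∑ x, |M j a x * (V.map M).prod x b| := Finset.abs_sum_le_sum_abs _ _
      _ ≤ ∑ _x : n, (Fintype.card n : ℝ) ^ V.length := by
        gcongr with x
        rw [abs_mul]
        simpa using mul_le_mul (hM j a x) (ih x) (abs_nonneg _) zero_le_one
      _ = _ := by simp [mul_comm]

lemma summable_abs_mul_list_prod_apply_mul_pow {c : List ι → ℝ} {R s : ℝ}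
    (hc : Summable fun V => |c V| * R ^ V.length) (M : ι → Matrix n n ℝ)
    (hM : ∀ j a b, |M j a b| ≤ 1) (hs : 0 ≤ s) (hsR : Fintype.card n * s ≤ R) (a b : n) :
    Summable fun V => |c V * (V.map M).prod a b| * s ^ V.length := by
  refine hc.of_nonneg_of_le (fun V => by positivity) fun V => ?_
  calc |c V * (V.map M).prod a b| * s ^ V.length
      = |c V| * (|(V.map M).prod a b| * s ^ V.length) := by rw [abs_mul, mul_assoc]
    _ ≤ |c V| * ((Fintype.card n : ℝ) ^ V.length * s ^ V.length) := by
      gcongr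
      exact abs_list_prod_apply_le M hM V a b
    _ ≤ |c V| * R ^ V.length := by
      rw [← mul_pow]
      gcongr

lemma list_prod_map_smul_s8 (M : ι → Matrix n n ℝ) (t : ℝ) (V : List ι) :
    (V.map fun j => t • M j).prod = t ^ V.length • (V.map M).prod := by
  rw [← List.length_map (f := M), List.smul_prod, List.map_map]
  rfl

lemma smul_list_prod_map_smul_apply (M : ι → Matrix n n ℝ) (c t : ℝ) (V : List ι) (a b : n) :
    (c • (V.map fun j => t • M j).prod) a b = c * (V.map M).prod a b * t ^ V.length := by
  rw [list_prod_map_smul_s8, smul_smul, Matrix.smul_apply, smul_eq_mul]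
  ring

variable {c : List ι → ℝ} {R t : ℝ}

lemma summable_smul_list_prod_map_smul (hc : Summable fun V => |c V| * R ^ V.length)
    (M : ι → Matrix n n ℝ) (hM : ∀ j a b, |M j a b| ≤ 1) (ht : 0 ≤ t)
    (htR : Fintype.card n * t ≤ R) :
    Summable fun V => c V • (V.map fun j => t • M j).prod := by
  refine Pi.summable.2 fun a => Pi.summable.2 fun b => ?_
  simp_rw [smul_list_prod_map_smul_apply]
  refine Summable.of_abs ?_
  simpa only [abs_mul, abs_pow, abs_of_nonneg ht] using
    summable_abs_mul_list_prod_apply_mul_pow hc M hM ht htR a b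

lemma tsum_smul_list_prod_map_smul_apply {M : ι → Matrix n n ℝ}
    (hsum : Summable fun V => c V • (V.map fun j => t • M j).prod) (a b : n) :
    (∑' V, c V • (V.map fun j => t • M j).prod) a b =
      ∑' V, c V * (V.map M).prod a b * t ^ V.length := by
  have hentry := Pi.hasSum.1 (Pi.hasSum.1 hsum.hasSum a) b
  simp only [smul_list_prod_map_smul_apply] at hentry
  exact hentry.tsum_eq.symm

end ListProd

section WordMatrix

variable {α : Type*} [DecidableEq α] {k : ℕ}

lemma TriAnti.smul {N : Matrix (Fin k) (Fin k) ℝ} (hN : TriAnti N) (t : ℝ) : TriAnti (t • N) :=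
  ⟨by rw [transpose_smul, ← smul_add, hN.1, smul_zero],
    fun a b hab => by rw [Matrix.smul_apply, hN.2 a b hab, smul_zero]⟩

lemma triAnti_sub_transpose {M : Matrix (Fin k) (Fin k) ℝ}
    (hM : ∀ a b : Fin k, ((a : ℤ) - (b : ℤ)).natAbs ≠ 1 → M a b = 0) : TriAnti (M - Mᵀ) := by
  refine ⟨by rw [transpose_sub, transpose_transpose]; abel, fun a b hab => ?_⟩
  rw [Matrix.sub_apply, transpose_apply, hM a b hab, hM b a (by omega), sub_zero]

def wordShift (k : ℕ) (W : List α) (j : α) : Matrix (Fin k) (Fin k) ℝ :=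
  of fun a b => if b.val = a.val + 1 ∧ W[a.val]? = some j then 1 else 0

def wordMatrix (k : ℕ) (W : List α) (j : α) : Matrix (Fin k) (Fin k) ℝ :=
  wordShift k W j - (wordShift k W j)ᵀ

lemma triAnti_wordMatrix (W : List α) (j : α) : TriAnti (wordMatrix k W j) :=
  triAnti_sub_transpose fun a b hab => if_neg fun h => hab (by omega)

lemma abs_wordMatrix_apply_le (W : List α) (j : α) (a b : Fin k) :
    |wordMatrix k W j a b| ≤ 1 := by
  simp only [wordMatrix, wordShift, Matrix.sub_apply, transpose_apply, of_apply]
  split_ifs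
  · omega
  all_goals norm_num

lemma wordMatrix_list_prod_apply (W : List α) (hW : W.length < k) (V : List α) (a : Fin k)
    (ha : a.val + V.length ≤ W.length) :
    (V.map (wordMatrix k W)).prod a ⟨W.length, hW⟩ = if V = W.drop a then 1 else 0 := by
  induction V generalizing a with
  | nil =>
    simp only [List.map_nil, List.prod_nil, one_apply, Fin.ext_iff, eq_comm (a := []),
      List.drop_eq_nil_iff]
    rw [List.length_nil, Nat.add_zero] at ha
    exact if_congr ⟨fun h => by omega, fun h => by omega⟩ rfl rfl
  | cons j V ih =>
    rw [List.length_cons] at ha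
    have ha₁ : a.val + 1 < k := by omega
    rw [List.map_cons, List.prod_cons, mul_apply, Finset.sum_eq_single ⟨a.val + 1, ha₁⟩]
    · have hstep : wordMatrix k W j a ⟨a.val + 1, ha₁⟩ = if W[a.val]? = some j then 1 else 0 := by
        simp [wordMatrix, wordShift]
        omega
      have hdrop : j :: V = W.drop a ↔ W[a.val]? = some j ∧ V = W.drop (a.val + 1) := by
        rw [List.drop_eq_getElem_cons (by omega), List.cons.injEq,
          List.getElem?_eq_getElem (by omega), Option.some_inj, eq_comm (a := j)]
      rw [hstep, ih ⟨a.val + 1, ha₁⟩ (by simp only; omega), ite_zero_mul_ite_zero, one_mul]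
      exact if_congr hdrop.symm rfl rfl
    · intro x _ hx
      simp only [wordMatrix, wordShift, Matrix.sub_apply, transpose_apply, of_apply]
      rw [if_neg fun h => hx (Fin.ext h.1)]
      split_ifs with h
      · rw [ih x (by omega), if_neg, mul_zero]
        intro hV
        have := congrArg List.length hV
        simp only [List.length_drop] at this
        omega
      · simp
    · simp

lemma wordMatrix_list_prod_corner (W : List α) (hW : W.length < k) (V : List α)
    (hV : V.length ≤ W.length) :
    (V.map (wordMatrix k W)).prod ⟨0, by omega⟩ ⟨W.length, hW⟩ = if V = W then 1 else 0 := by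
  simpa using wordMatrix_list_prod_apply W hW V ⟨0, by omega⟩ (by simpa using hV)

end WordMatrix

theorem stmt8_general (d : ℕ) (c : List (Fin d) → ℝ) (R : ℝ) (hR : 0 < R)
    (hc : Summable fun V : List (Fin d) => |c V| * R ^ V.length)
    (W : List (Fin d)) (hW : c W ≠ 0) (k : ℕ) (hk : W.length + 1 ≤ k) :
    ∃ N : Fin d → Matrix (Fin k) (Fin k) ℝ,
      (∀ j, TriAnti (N j)) ∧
      Summable (fun V : List (Fin d) => c V • (V.map N).prod) ∧
      (∑' V : List (Fin d), c V • (V.map N).prod) ≠ 0 := by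
  have hk₀ : (0 : ℝ) < k := by exact_mod_cast (by omega : 0 < k)
  have hcorner := wordMatrix_list_prod_corner W hk
  have hlead : ∀ᶠ t in 𝓝[>] 0, ∑' V, c V * (V.map (wordMatrix k W)).prod ⟨0, by omega⟩
      ⟨W.length, hk⟩ * t ^ V.length ≠ 0 :=
    eventually_tsum_mul_pow_ne_zero (div_pos hR hk₀)
      (summable_abs_mul_list_prod_apply_mul_pow hc _ (abs_wordMatrix_apply_le W)
        (div_pos hR hk₀).le (by simpa using (mul_div_cancel₀ R hk₀.ne').le) _ _)
      (by rwa [hcorner W le_rfl, if_pos rfl, mul_one])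
      fun V hV hlen => by rw [hcorner V hlen, if_neg hV, mul_zero]
  obtain ⟨t, hne, ht₀, htR⟩ := (hlead.and (Ioo_mem_nhdsGT (div_pos hR hk₀))).exists
  have hsum := summable_smul_list_prod_map_smul hc _ (abs_wordMatrix_apply_le W) ht₀.le
    (by simpa [mul_comm] using ((lt_div_iff₀ hk₀).1 htR).le)
  refine ⟨_, fun j => (triAnti_wordMatrix W j).smul t, hsum, fun h => hne ?_⟩
  rw [← tsum_smul_list_prod_map_smul_apply hsum, h, Matrix.zero_apply]

/-- if a coefficient family `c` with radius of convergence at least `R > 0`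
satisfies `c(W) ≠ 0` for a word `W` of length `n`, then for every `k ≥ n + 1` there are
tridiagonal antisymmetric `k × k` real matrices `N_1, …, N_d` such that `(c(V) • N_V)_V` is
summable with nonzero sum.  Here `N_V` is the ordered product `N_{v_1} ⬝ ⋯ ⬝ N_{v_m}`. -/
theorem stmt8 (d : ℕ) (hd : 0 < d) (c : List (Fin d) → ℝ) (R : ℝ) (hR : 0 < R)
    (hc : Summable fun V : List (Fin d) => |c V| * R ^ V.length)
    (W : List (Fin d)) (hW : c W ≠ 0) (k : ℕ) (hk : W.length + 1 ≤ k) :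
    ∃ N : Fin d → Matrix (Fin k) (Fin k) ℝ,
      (∀ j, TriAnti (N j)) ∧
      Summable (fun V : List (Fin d) => c V • (V.map N).prod) ∧
      (∑' V : List (Fin d), c V • (V.map N).prod) ≠ 0 :=
  stmt8_general d c R hR hc W hW k hk
end

section
/- Let c be a coefficient family with radius of convergence at least R for some R > 0. Let k ≥ 1 and let N_1,…,N_d be k×k real matrices; set ρ := max_{1≤i≤d} ‖N_i‖, where ‖·‖ is the Frobenius norm, and U := {θ ∈ ℝ^d : ρ · max_{1≤i≤d} |θ_i| < R}. Then for every θ ∈ U the family (c(V) · (θ_{v_1}N_{v_1}) • (θ_{v_2}N_{v_2}) • ⋯ • (θ_{v_{|V|}}N_{v_{|V|}}))_{V a word} is summable in the space of k×k real matrices, and the function f : U → ℝ^{k×k} given by f(θ) := ∑'_V c(V) · (θ_{v_1}N_{v_1}) • ⋯ • (θ_{v_{|V|}}N_{v_{|V|}}) is infinitely differentiable (C^∞) on the open set U. -/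
open Matrix

/- Equip matrices with the Frobenius (Hilbert–Schmidt) norm, as in the paper. -/
attribute [local instance] Matrix.frobeniusNormedAddCommGroup Matrix.frobeniusNormedSpace

open scoped NNReal ENNReal

namespace Stmt12Aux

variable {d k : ℕ}

attribute [-instance] instTopologicalSpaceMatrix Matrix.instUniformSpace

theorem prod_map_smul (N : Fin d → Matrix (Fin k) (Fin k) ℝ) (θ : Fin d → ℝ) :
    ∀ V : List (Fin d),
      (V.map fun v => θ v • N v).prod = (V.map θ).prod • (V.map N).prod
  | [] => by simp
  | v :: V => by
    simp only [List.map_cons, List.prod_cons, prod_map_smul N θ V, smul_mul_assoc,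
      mul_smul_comm, smul_smul, mul_comm]

theorem norm_prod_map_le (N : Fin d → Matrix (Fin k) (Fin k) ℝ) {ρ : ℝ}
    (hρ : ∀ i, ‖N i‖ ≤ ρ) :
    ∀ V : List (Fin d),
      ‖(V.map N).prod‖ ≤ ‖(1 : Matrix (Fin k) (Fin k) ℝ)‖ * ρ ^ V.length
  | [] => by simp
  | v :: V => by
    have h0 : 0 ≤ ρ := (norm_nonneg _).trans (hρ v)
    have ih := norm_prod_map_le N hρ V
    calc ‖((v :: V).map N).prod‖ = ‖N v * (V.map N).prod‖ := by simp
      _ ≤ ‖N v‖ * ‖(V.map N).prod‖ := Matrix.frobenius_norm_mul _ _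
      _ ≤ ρ * (‖(1 : Matrix (Fin k) (Fin k) ℝ)‖ * ρ ^ V.length) :=
          mul_le_mul (hρ v) ih (norm_nonneg _) h0
      _ = ‖(1 : Matrix (Fin k) (Fin k) ℝ)‖ * ρ ^ (v :: V).length := by
          simp [pow_succ]; ring

noncomputable def wordSeries (d k : ℕ) (c : List (Fin d) → ℝ)
    (N : Fin d → Matrix (Fin k) (Fin k) ℝ) :
    FormalMultilinearSeries ℝ (Fin d → ℝ) (Matrix (Fin k) (Fin k) ℝ) := fun n =>
  ∑ V : Fin n → Fin d,
    c (List.ofFn V) •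
      (((ContinuousMultilinearMap.mkPiAlgebra ℝ (Fin n) ℝ).compContinuousLinearMap
          fun ℓ => ContinuousLinearMap.proj (V ℓ)).smulRight ((List.ofFn V).map N).prod)

theorem wordSeries_apply (c : List (Fin d) → ℝ) (N : Fin d → Matrix (Fin k) (Fin k) ℝ)
    (n : ℕ) (θ : Fin d → ℝ) :
    (wordSeries d k c N n) (fun _ => θ) =
      ∑ V : Fin n → Fin d,
        c (List.ofFn V) • ((List.ofFn V).map fun v => θ v • N v).prod := by
  rw [wordSeries, ContinuousMultilinearMap.sum_apply]
  refine Finset.sum_congr rfl fun V _ => ?_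
  rw [ContinuousMultilinearMap.smul_apply, ContinuousMultilinearMap.smulRight_apply,
    ContinuousMultilinearMap.compContinuousLinearMap_apply,
    ContinuousMultilinearMap.mkPiAlgebra_apply, prod_map_smul]
  congr 2
  simp [List.map_ofFn, List.prod_ofFn, Function.comp]

theorem norm_wordSeries_le (c : List (Fin d) → ℝ) (N : Fin d → Matrix (Fin k) (Fin k) ℝ)
    {ρ : ℝ} (hρ : ∀ i, ‖N i‖ ≤ ρ) (n : ℕ) :
    ‖wordSeries d k c N n‖ ≤
      ∑ V : Fin n → Fin d,
        |c (List.ofFn V)| * (‖(1 : Matrix (Fin k) (Fin k) ℝ)‖ * ρ ^ n) := by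
  refine (norm_sum_le _ _).trans (Finset.sum_le_sum fun V _ => ?_)
  refine le_trans (le_of_eq (norm_smul (β := ContinuousMultilinearMap ℝ
    (fun _ : Fin n => (Fin d → ℝ)) (Matrix (Fin k) (Fin k) ℝ)) (c (List.ofFn V)) _)) ?_
  rw [Real.norm_eq_abs, ContinuousMultilinearMap.norm_smulRight]
  refine mul_le_mul_of_nonneg_left ?_ (abs_nonneg _)
  have hproj : ∀ i : Fin d,
      ‖(ContinuousLinearMap.proj i : (Fin d → ℝ) →L[ℝ] ℝ)‖ ≤ 1 := fun i =>
    ContinuousLinearMap.opNorm_le_bound _ zero_le_one fun x => by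
      simpa using norm_le_pi_norm x i
  have hmono : ‖(ContinuousMultilinearMap.mkPiAlgebra ℝ (Fin n) ℝ).compContinuousLinearMap
      fun ℓ => (ContinuousLinearMap.proj (V ℓ) : (Fin d → ℝ) →L[ℝ] ℝ)‖ ≤ 1 := by
    refine (ContinuousMultilinearMap.norm_compContinuousLinearMap_le _ _).trans ?_
    rw [ContinuousMultilinearMap.norm_mkPiAlgebra, one_mul]
    exact Finset.prod_le_one (fun _ _ => norm_nonneg _) fun ℓ _ => hproj (V ℓ)
  have hM : ‖((List.ofFn V).map N).prod‖ ≤ ‖(1 : Matrix (Fin k) (Fin k) ℝ)‖ * ρ ^ n := by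
    simpa using norm_prod_map_le N hρ (List.ofFn V)
  refine (mul_le_mul hmono hM (norm_nonneg _) zero_le_one).trans (le_of_eq (one_mul _))


theorem abs_prod_map_le (θ : Fin d → ℝ) {t : ℝ} (ht : ∀ i, |θ i| ≤ t) :
    ∀ V : List (Fin d), |(V.map θ).prod| ≤ t ^ V.length
  | [] => by simp
  | v :: V => by
    have h0 : 0 ≤ t := (abs_nonneg _).trans (ht v)
    calc |((v :: V).map θ).prod| = |θ v| * |(V.map θ).prod| := by
          simp [abs_mul]
      _ ≤ t * t ^ V.length :=
          mul_le_mul (ht v) (abs_prod_map_le θ ht V) (abs_nonneg _) h0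
      _ = t ^ (v :: V).length := by simp [pow_succ]; ring

theorem le_radius_wordSeries (c : List (Fin d) → ℝ) (N : Fin d → Matrix (Fin k) (Fin k) ℝ)
    {R ρ : ℝ}
    (hc : Summable fun V : List (Fin d) => |c V| * R ^ V.length)
    (hρ : ∀ i, ‖N i‖ ≤ ρ) (hρ0 : 0 ≤ ρ) (r : ℝ≥0) (hr : (r : ℝ) * ρ ≤ R) :
    (r : ℝ≥0∞) ≤ (wordSeries d k c N).radius := by
  classical
  set C := ‖(1 : Matrix (Fin k) (Fin k) ℝ)‖ with hC
  have hC0 : 0 ≤ C := norm_nonneg _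
  refine FormalMultilinearSeries.le_radius_of_bound _
    (C * ∑' V : List (Fin d), |c V| * R ^ V.length) fun n => ?_
  have h2 : ∑ V : Fin n → Fin d, |c (List.ofFn V)| * R ^ n ≤
      ∑' V : List (Fin d), |c V| * R ^ V.length := by
    have hle := Summable.sum_le_tsum (Finset.univ.map
      ⟨(List.ofFn : (Fin n → Fin d) → List (Fin d)), List.ofFn_injective⟩)
      (fun W _ => mul_nonneg (abs_nonneg _) (by
        have h0R : 0 ≤ R := le_trans (mul_nonneg r.coe_nonneg hρ0) hr
        positivity)) hc
    refine le_trans (le_of_eq ?_) hle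
    rw [Finset.sum_map]
    exact Finset.sum_congr rfl fun V _ => by simp
  have h0R : 0 ≤ R := le_trans (mul_nonneg r.coe_nonneg hρ0) hr
  calc ‖wordSeries d k c N n‖ * (r : ℝ) ^ n
      ≤ (∑ V : Fin n → Fin d, |c (List.ofFn V)| * (C * ρ ^ n)) * (r : ℝ) ^ n :=
        mul_le_mul_of_nonneg_right (norm_wordSeries_le c N hρ n) (by positivity)
    _ = C * ∑ V : Fin n → Fin d, |c (List.ofFn V)| * ((r : ℝ) * ρ) ^ n := by
        rw [Finset.sum_mul, Finset.mul_sum]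
        exact Finset.sum_congr rfl fun V _ => by rw [mul_pow]; ring
    _ ≤ C * ∑ V : Fin n → Fin d, |c (List.ofFn V)| * R ^ n := by
        refine mul_le_mul_of_nonneg_left (Finset.sum_le_sum fun V _ => ?_) hC0
        exact mul_le_mul_of_nonneg_left
          (pow_le_pow_left₀ (mul_nonneg r.coe_nonneg hρ0) hr n) (abs_nonneg _)
    _ ≤ C * ∑' V : List (Fin d), |c V| * R ^ V.length :=
        mul_le_mul_of_nonneg_left h2 hC0

theorem sum_wordSeries (c : List (Fin d) → ℝ) (N : Fin d → Matrix (Fin k) (Fin k) ℝ)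
    (θ : Fin d → ℝ)
    (h : Summable fun V : List (Fin d) => c V • (V.map fun v => θ v • N v).prod) :
    (wordSeries d k c N).sum θ =
      ∑' V : List (Fin d), c V • (V.map fun v => θ v • N v).prod := by
  set F := fun V : List (Fin d) => c V • (V.map fun v => θ v • N v).prod with hF
  have hσ : Summable fun σ : Σ n, Fin n → Fin d => F (List.ofFn σ.2) := by
    have h2 := ((List.equivSigmaTuple (α := Fin d)).symm.summable_iff (f := F)).2 h
    simpa [List.equivSigmaTuple, Function.comp_def] using h2
  calc (wordSeries d k c N).sum θ
      = ∑' n, (wordSeries d k c N n) (fun _ => θ) := rfl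
    _ = ∑' n, ∑' V : Fin n → Fin d, F (List.ofFn V) := by
        refine tsum_congr fun n => ?_
        rw [wordSeries_apply c N n θ, tsum_fintype]
    _ = ∑' σ : Σ n, Fin n → Fin d, F (List.ofFn σ.2) := (Summable.tsum_sigma hσ).symm
    _ = ∑' V : List (Fin d), F V := by
        simpa [List.equivSigmaTuple] using
          (List.equivSigmaTuple (α := Fin d)).symm.tsum_eq F

theorem sup'_abs_eq_norm (hd : 0 < d) (θ : Fin d → ℝ) :
    (Finset.univ.sup' ⟨⟨0, hd⟩, Finset.mem_univ _⟩ fun i : Fin d => |θ i|) = ‖θ‖ := by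
  apply le_antisymm
  · exact Finset.sup'_le _ _ fun i _ => by
      simpa [Real.norm_eq_abs] using norm_le_pi_norm θ i
  · have h0 : 0 ≤ Finset.univ.sup' ⟨⟨0, hd⟩, Finset.mem_univ _⟩ fun i : Fin d => |θ i| :=
      le_trans (abs_nonneg (θ ⟨0, hd⟩))
        (Finset.le_sup' (fun i : Fin d => |θ i|) (Finset.mem_univ ⟨0, hd⟩))
    refine (pi_norm_le_iff_of_nonneg h0).2 fun i => ?_
    simpa [Real.norm_eq_abs] using Finset.le_sup' (fun i : Fin d => |θ i|) (Finset.mem_univ i)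

end Stmt12Aux

/-- for a coefficient family `c` with radius of convergence at least `R > 0` and
`k × k` real matrices `N_1, …, N_d`, with `ρ := max_i ‖N_i‖` (Frobenius norm) and
`U := {θ : ρ · max_i |θ_i| < R}`: for every `θ ∈ U` the family
`(c(V) • (θ_{v_1}N_{v_1}) ⬝ ⋯ ⬝ (θ_{v_{|V|}}N_{v_{|V|}}))_V` is summable, and
`f(θ) := ∑'_V c(V) • (θ_{v_1}N_{v_1}) ⬝ ⋯ ⬝ (θ_{v_{|V|}}N_{v_{|V|}})` is `C^∞` on `U`. -/
theorem stmt12 (d : ℕ) (hd : 0 < d) (c : List (Fin d) → ℝ) (R : ℝ) (hR : 0 < R)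
    (hc : Summable fun V : List (Fin d) => |c V| * R ^ V.length)
    (k : ℕ) (hk : 0 < k) (N : Fin d → Matrix (Fin k) (Fin k) ℝ) :
    (∀ θ ∈ {θ : Fin d → ℝ |
        (Finset.univ.sup' ⟨⟨0, hd⟩, Finset.mem_univ _⟩ fun i : Fin d => ‖N i‖) *
          (Finset.univ.sup' ⟨⟨0, hd⟩, Finset.mem_univ _⟩ fun i : Fin d => |θ i|) < R},
        Summable fun V : List (Fin d) => c V • (V.map fun v => θ v • N v).prod) ∧
    ContDiffOn ℝ (⊤ : ℕ∞)
      (fun θ : Fin d → ℝ =>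
        ∑' V : List (Fin d), c V • (V.map fun v => θ v • N v).prod)
      {θ : Fin d → ℝ |
        (Finset.univ.sup' ⟨⟨0, hd⟩, Finset.mem_univ _⟩ fun i : Fin d => ‖N i‖) *
          (Finset.univ.sup' ⟨⟨0, hd⟩, Finset.mem_univ _⟩ fun i : Fin d => |θ i|) < R} := by
  classical
  open Stmt12Aux in
  set ρ : ℝ := Finset.univ.sup' ⟨⟨0, hd⟩, Finset.mem_univ _⟩ (fun i : Fin d => ‖N i‖) with hρdef
  have hρb : ∀ i, ‖N i‖ ≤ ρ := fun i => Finset.le_sup' (fun i : Fin d => ‖N i‖) (Finset.mem_univ i)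
  have hρ0 : 0 ≤ ρ := le_trans (norm_nonneg (N ⟨0, hd⟩)) (hρb ⟨0, hd⟩)
  set C := ‖(1 : Matrix (Fin k) (Fin k) ℝ)‖ with hC
  have hC0 : 0 ≤ C := norm_nonneg _
  -- summability
  have hsum : ∀ θ ∈ {θ : Fin d → ℝ |
      ρ * (Finset.univ.sup' ⟨⟨0, hd⟩, Finset.mem_univ _⟩ fun i : Fin d => |θ i|) < R},
      Summable fun V : List (Fin d) => c V • (V.map fun v => θ v • N v).prod := by
    intro θ hθ
    set t : ℝ := Finset.univ.sup' ⟨⟨0, hd⟩, Finset.mem_univ _⟩ (fun i : Fin d => |θ i|) with htdef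
    have htb : ∀ i, |θ i| ≤ t := fun i =>
      Finset.le_sup' (fun i : Fin d => |θ i|) (Finset.mem_univ i)
    have ht0 : 0 ≤ t := le_trans (abs_nonneg (θ ⟨0, hd⟩)) (htb ⟨0, hd⟩)
    have hθ' : ρ * t < R := hθ
    refine Summable.of_norm_bounded (hc.mul_left C)
      fun V => ?_
    calc ‖c V • (V.map fun v => θ v • N v).prod‖
        ≤ |c V| * ‖(V.map fun v => θ v • N v).prod‖ := by
          simpa [Real.norm_eq_abs] using norm_smul_le (c V) ((V.map fun v => θ v • N v).prod)
      _ ≤ |c V| * (t ^ V.length * (C * ρ ^ V.length)) := by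
          refine mul_le_mul_of_nonneg_left ?_ (abs_nonneg _)
          rw [Stmt12Aux.prod_map_smul]
          refine le_trans (norm_smul_le _ _) ?_
          refine mul_le_mul ?_ (Stmt12Aux.norm_prod_map_le N hρb V) (norm_nonneg _)
            (by positivity)
          simpa [Real.norm_eq_abs] using Stmt12Aux.abs_prod_map_le θ htb V
      _ = C * (|c V| * (ρ * t) ^ V.length) := by rw [mul_pow]; ring
      _ ≤ C * (|c V| * R ^ V.length) := by
          refine mul_le_mul_of_nonneg_left (mul_le_mul_of_nonneg_left ?_ (abs_nonneg _)) hC0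
          exact pow_le_pow_left₀ (by positivity) hθ'.le _
  refine ⟨hsum, ?_⟩
  -- smoothness
  have : CompleteSpace (Matrix (Fin k) (Fin k) ℝ) := FiniteDimensional.complete ℝ _
  set p := Stmt12Aux.wordSeries d k c N with hp
  have hrad : ∀ r : NNReal, (r : ℝ) * ρ ≤ R → (r : ENNReal) ≤ p.radius := fun r hr =>
    Stmt12Aux.le_radius_wordSeries c N hc hρb hρ0 r hr
  have hpos : 0 < p.radius := by
    have h1 : (0:ℝ) < R / (ρ + 1) := by positivity
    refine lt_of_lt_of_le ?_ (hrad (R / (ρ + 1)).toNNReal ?_)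
    · exact_mod_cast Real.toNNReal_pos.2 h1
    · rw [Real.coe_toNNReal _ h1.le, div_mul_eq_mul_div, div_le_iff₀ (by positivity)]
      nlinarith
  have hsub : {θ : Fin d → ℝ |
      ρ * (Finset.univ.sup' ⟨⟨0, hd⟩, Finset.mem_univ _⟩ fun i : Fin d => |θ i|) < R} ⊆
      Metric.eball (0 : Fin d → ℝ) p.radius := by
    intro θ hθ
    have hθ' : ρ * ‖θ‖ < R := by
      have := Stmt12Aux.sup'_abs_eq_norm hd θ
      rw [← this]; exact hθ
    rw [Metric.mem_eball, edist_zero_right]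
    rcases eq_or_lt_of_le hρ0 with hρz | hρp
    · refine lt_of_lt_of_le ?_ (hrad (‖θ‖₊ + 1) ?_)
      · exact_mod_cast lt_add_one ‖θ‖₊
      · rw [← hρz, mul_zero]; exact hR.le
    · refine lt_of_lt_of_le ?_ (hrad (R / ρ).toNNReal ?_)
      · have h2 : ‖θ‖ < R / ρ := by
          rw [lt_div_iff₀ hρp]; nlinarith
        rw [enorm_eq_nnnorm, ENNReal.coe_lt_coe, ← NNReal.coe_lt_coe, coe_nnnorm,
          Real.coe_toNNReal _ (by positivity)]
        exact h2
      · rw [Real.coe_toNNReal _ (by positivity), div_mul_cancel₀ _ (ne_of_gt hρp)]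
  have hcd := ((p.hasFPowerSeriesOnBall hpos).analyticOnNhd.contDiffOn_of_completeSpace
    (n := (⊤ : ℕ∞))).mono hsub
  refine hcd.congr fun θ hθ => ?_
  exact (Stmt12Aux.sum_wordSeries c N θ (hsum θ hθ)).symm
end
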